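/- arXiv:2408.06282 — 10 statements merged into one kernel-verified Lean document; each statement's English description precedes it below -/
import Mathlib

section
/- Let C be an almost MDS code over F_q with parameters [n, k, n-k]. Then for every subset I ⊆ {1, ..., n} with |I| = n-k+1, the dimension of the subspace C(I) of codewords with support contained in I is either 1 or 2. -/
open Finset

/-- The submodule of vectors supported in a finset `I`. -/
def suppCode (F : Type*) [Field F] (n : ℕ) (I : Finset (Fin n)) :
    Submodule F (Fin n → F) where
  carrier := {c | ∀ i, i ∉ I → c i = 0}
  add_mem' := by
    intro a b ha hb i hi
    simp [ha i hi, hb i hi]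
  zero_mem' := by
    intro i _
    rfl
  smul_mem' := by
    intro r a ha i hi
    simp [ha i hi]

/-- `C` is an `[n, k, n-k]` almost MDS code. -/
def IsAMDS (F : Type*) [Field F] [DecidableEq F] (n k : ℕ)
    (C : Submodule F (Fin n → F)) : Prop :=
  Module.finrank F C = k ∧
  (∀ c ∈ C, c ≠ 0 → n - k ≤ hammingNorm c) ∧
  (∃ c ∈ C, c ≠ 0 ∧ hammingNorm c = n - k)

/-- The Euclidean dual code. -/
def dualCode {F : Type*} [Field F] {n : ℕ} (C : Submodule F (Fin n → F)) :
    Submodule F (Fin n → F) where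
  carrier := {x | ∀ c ∈ C, ∑ i, x i * c i = 0}
  add_mem' := by
    intro a b ha hb c hc
    simp [Pi.add_apply, add_mul, Finset.sum_add_distrib, ha c hc, hb c hc]
  zero_mem' := by
    intro c _
    simp
  smul_mem' := by
    intro r a ha c hc
    simp [Pi.smul_apply, smul_eq_mul, mul_assoc, ← Finset.mul_sum, ha c hc]

/-! A codeword of `C` supported in `I` is determined by its values on any two points of `I`: two
more zeros would leave it fewer than `n - k` nonzero entries. So `dim C(I) ≤ 2`. On the other
hand `C(I) = C ∩ F^I` and `dim C + dim F^I = n + 1`, so `dim C(I) ≥ 1`. -/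

namespace suppCode

variable {F : Type*} [Field F] {n : ℕ}

theorem eq_ker_funLeft (I : Finset (Fin n)) :
    suppCode F n I = LinearMap.ker (LinearMap.funLeft F F ((↑) : ↥(Iᶜ : Finset (Fin n)) → Fin n)) := by
  ext c
  simp only [LinearMap.mem_ker, funext_iff, LinearMap.funLeft_apply, Pi.zero_apply, Subtype.forall,
    Finset.mem_compl]
  rfl

theorem finrank_eq (I : Finset (Fin n)) : Module.finrank F (suppCode F n I) = I.card := by
  have hsurj := LinearMap.funLeft_surjective_of_injective F F _ Subtype.val_injective
    (m := ↥(Iᶜ : Finset (Fin n)))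
  have hrank := LinearMap.finrank_range_add_finrank_ker
    (LinearMap.funLeft F F ((↑) : ↥(Iᶜ : Finset (Fin n)) → Fin n))
  rw [LinearMap.range_eq_top.mpr hsurj, finrank_top, Module.finrank_fintype_fun_eq_card,
    Fintype.card_coe, Finset.card_compl, Fintype.card_fin, Module.finrank_fin_fun,
    ← eq_ker_funLeft] at hrank
  have hI := I.card_le_univ
  rw [Fintype.card_fin] at hI
  omega

theorem finrank_add_card_le_finrank_inf_add (C : Submodule F (Fin n → F)) (I : Finset (Fin n)) :
    Module.finrank F C + I.card ≤ Module.finrank F ↥(C ⊓ suppCode F n I) + n := by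
  have hdim := Submodule.finrank_sup_add_finrank_inf_eq C (suppCode F n I)
  have hsup := (C ⊔ suppCode F n I).finrank_le
  rw [finrank_eq] at hdim
  rw [Module.finrank_fin_fun] at hsup
  omega

theorem hammingNorm_le_card [DecidableEq F] {I : Finset (Fin n)} {c : Fin n → F}
    (hc : c ∈ suppCode F n I) : hammingNorm c ≤ I.card :=
  Finset.card_le_card fun i hi ↦ by
    by_contra hiI
    exact (Finset.mem_filter.mp hi).2 (hc i hiI)

theorem finrank_inf_le_card [DecidableEq F] {C : Submodule F (Fin n → F)} {d : ℕ}
    (hmin : ∀ c ∈ C, c ≠ 0 → d ≤ hammingNorm c) {I J : Finset (Fin n)}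
    (hIJ : (I \ J).card < d) :
    Module.finrank F ↥(C ⊓ suppCode F n I) ≤ J.card := by
  let restrict := LinearMap.funLeft F F ((↑) : ↥J → Fin n)
  have hinj : Function.Injective (restrict.domRestrict (C ⊓ suppCode F n I)) := by
    rw [LinearMap.injective_domRestrict_iff, Submodule.disjoint_def]
    rintro c ⟨hcC, hcI⟩ hcJ
    have hcIJ : c ∈ suppCode F n (I \ J) := fun i hi ↦ by
      by_cases hiJ : i ∈ J
      · exact congrFun (LinearMap.mem_ker.mp hcJ) ⟨i, hiJ⟩
      · exact hcI i fun hiI ↦ hi (Finset.mem_sdiff.mpr ⟨hiI, hiJ⟩)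
    by_contra hc
    have := hmin c hcC hc
    have := hammingNorm_le_card hcIJ
    omega
  simpa using LinearMap.finrank_le_finrank_of_injective hinj

end suppCode

theorem stmt3_general {F : Type*} [Field F] [DecidableEq F] {n k : ℕ}
    (C : Submodule F (Fin n → F)) (hC : IsAMDS F n k C)
    (I : Finset (Fin n)) (hI : I.card = n - k + 1) :
    Module.finrank F ↥(C ⊓ suppCode F n I) = 1 ∨
    Module.finrank F ↥(C ⊓ suppCode F n I) = 2 := by
  obtain ⟨hk, hmin, c₀, -, hc₀, hc₀weight⟩ := hC
  have hd : 0 < n - k := hc₀weight ▸ hammingNorm_pos_iff.mpr hc₀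
  have hkn : k ≤ n := by simpa [hk] using C.finrank_le
  have hlower := suppCode.finrank_add_card_le_finrank_inf_add C I
  obtain ⟨J, hJI, hJ⟩ := Finset.exists_subset_card_eq (s := I) (n := 2) (by omega)
  have hupper : Module.finrank F ↥(C ⊓ suppCode F n I) ≤ J.card :=
    suppCode.finrank_inf_le_card hmin (by rw [Finset.card_sdiff_of_subset hJI]; omega)
  omega

/-- for an AMDS `[n,k,n-k]` code, the subcode supported in any
`(n-k+1)`-subset has dimension `1` or `2`. -/
theorem stmt3 {F : Type*} [Field F] [Fintype F] [DecidableEq F] {n k : ℕ}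
    (C : Submodule F (Fin n → F)) (hC : IsAMDS F n k C)
    (I : Finset (Fin n)) (hI : I.card = n - k + 1) :
    Module.finrank F ↥(C ⊓ suppCode F n I) = 1 ∨
    Module.finrank F ↥(C ⊓ suppCode F n I) = 2 :=
  stmt3_general C hC I hI
end

section
/- Let C be an almost MDS code over F_q with parameters [n, k, n-k]. If C is a near MDS code (i.e., its dual code is also AMDS with minimum distance k), then k·A_{n-k} + A_{n-k+1} = (q-1)·binomial(n, n-k+1), where A_i denotes the number of codewords of C of Hamming weight i. -/
open Finset

/-!
Double count the pairs `(c, I)` with `c` a nonzero codeword supported in a set `I` of `n - k + 1`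
coordinates. A nonzero dual codeword supported in the `k - 1` coordinates off `I` would have weight
below the dual distance `k`, so the codewords supported in `I` form a subspace of dimension
`k + (n - k + 1) - n = 1`, and each `I` carries `q - 1` of them. Conversely a codeword of weight
`n - k` lies in `k` such sets, one of weight `n - k + 1` in exactly one, a heavier one in none, and
none is lighter.
-/

open Module

section LinearAlgebra

variable {F : Type*} [Field F] {n : ℕ}

lemma mem_suppCode_iff [DecidableEq F] {c : Fin n → F} {I : Finset (Fin n)} :
    c ∈ suppCode F n I ↔ ({i | c i ≠ 0} : Finset (Fin n)) ⊆ I := by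
  refine ⟨fun h i hi => ?_, fun h i hi => ?_⟩
  · by_contra hiI
    exact (mem_filter.1 hi).2 (h i hiI)
  · by_contra hci
    exact hi (h (mem_filter.2 ⟨mem_univ i, hci⟩))

instance [DecidableEq F] (I : Finset (Fin n)) : DecidablePred (· ∈ suppCode F n I) :=
  fun _ => decidable_of_iff _ mem_suppCode_iff.symm

lemma finrank_suppCode (I : Finset (Fin n)) : finrank F (suppCode F n I) = #I := by
  classical
  let e : suppCode F n I ≃ₗ[F] (I → F) :=
    { toFun := fun c i => c.1 i
      map_add' := fun _ _ => rfl
      map_smul' := fun _ _ => rfl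
      invFun := fun f => ⟨fun i => if h : i ∈ I then f ⟨i, h⟩ else 0, fun i hi => dif_neg hi⟩
      left_inv := fun c => Subtype.ext <| funext fun i => by
        by_cases h : i ∈ I
        · simp [h]
        · simp [h, c.2 i h]
      right_inv := fun f => funext fun i => by simp }
  rw [e.finrank_eq, Module.finrank_pi, Fintype.card_coe]

lemma dualCode_eq_comap_dualAnnihilator (W : Submodule F (Fin n → F)) :
    dualCode W = W.dualAnnihilator.comap (dotProductEquiv F (Fin n)).toLinearMap := by
  ext x
  simp [dualCode, Submodule.mem_dualAnnihilator, dotProduct]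

lemma finrank_add_finrank_dualCode (W : Submodule F (Fin n → F)) :
    finrank F W + finrank F (dualCode W) = n := by
  rw [dualCode_eq_comap_dualAnnihilator, Submodule.comap_equiv_eq_map_symm,
    LinearEquiv.finrank_map_eq, Subspace.finrank_add_finrank_dualAnnihilator_eq,
    Module.finrank_fin_fun]

lemma dualCode_sup (U W : Submodule F (Fin n → F)) :
    dualCode (U ⊔ W) = dualCode U ⊓ dualCode W := by
  simp only [dualCode_eq_comap_dualAnnihilator, Submodule.dualAnnihilator_sup_eq,
    Submodule.comap_inf]

lemma dualCode_suppCode (I : Finset (Fin n)) : dualCode (suppCode F n I) = suppCode F n Iᶜ := by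
  ext x
  refine ⟨fun hx i hi => ?_, fun hx c hc => Finset.sum_eq_zero fun i _ => ?_⟩
  · classical
    have hsingle : Pi.single i 1 ∈ suppCode F n I := fun j hj =>
      Pi.single_eq_of_ne (by rintro rfl; exact hj (by simpa using hi)) 1
    simpa [Pi.single_apply] using hx _ hsingle
  · by_cases hi : i ∈ I
    · rw [hx i (by simpa using hi), zero_mul]
    · rw [hc i hi, mul_zero]

lemma eq_top_of_dualCode_eq_bot {W : Submodule F (Fin n → F)} (h : dualCode W = ⊥) : W = ⊤ := by
  apply Submodule.eq_top_of_finrank_eq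
  have := finrank_add_finrank_dualCode W
  rw [h, finrank_bot, add_zero] at this
  rw [this, Module.finrank_fin_fun]

lemma finrank_inf_suppCode_add_of_dualCode_inf_eq_bot (W : Submodule F (Fin n → F))
    (I : Finset (Fin n)) (h : dualCode W ⊓ suppCode F n Iᶜ = ⊥) :
    finrank F ↥(W ⊓ suppCode F n I) + n = finrank F W + #I := by
  have hsup : W ⊔ suppCode F n I = ⊤ :=
    eq_top_of_dualCode_eq_bot (by rwa [dualCode_sup, dualCode_suppCode])
  have := Submodule.finrank_sup_add_finrank_inf_eq W (suppCode F n I)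
  rwa [hsup, finrank_top, Module.finrank_fin_fun, finrank_suppCode, add_comm n] at this

lemma card_filter_mem_ne_zero [Fintype F] {V : Type*} [AddCommGroup V] [Module F V] [Fintype V]
    [DecidableEq V] (D : Submodule F V) [DecidablePred (· ∈ D)] :
    #{v | v ∈ D ∧ v ≠ 0} = Fintype.card F ^ finrank F D - 1 := by
  have hfilter : ({v | v ∈ D ∧ v ≠ 0} : Finset V) = ({v | v ∈ D} : Finset V).erase 0 := by
    ext v
    simp [and_comm]
  rw [hfilter, card_erase_of_mem (by simp [D.zero_mem]), ← Module.card_eq_pow_finrank,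
    Fintype.card_subtype]

end LinearAlgebra

lemma card_filter_powersetCard_superset {α : Type*} [Fintype α] [DecidableEq α] {s : Finset α}
    {k : ℕ} (hk : k ≤ Fintype.card α) (hs : Fintype.card α - k ≤ #s) :
    #{I ∈ powersetCard (Fintype.card α - k + 1) univ | s ⊆ I} =
      k * (if #s = Fintype.card α - k then 1 else 0) +
        (if #s = Fintype.card α - k + 1 then 1 else 0) := by
  set N := Fintype.card α
  obtain h | h | h : #s = N - k ∨ #s = N - k + 1 ∨ N - k + 1 < #s := by omega
  · rw [card_filter_powersetCard_subset s univ _ (subset_univ s) (by omega), card_univ, h,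
      if_pos rfl, if_neg (by omega), Nat.sub_sub_self hk, Nat.add_sub_cancel_left,
      Nat.choose_one_right, mul_one, add_zero]
  · rw [card_filter_powersetCard_subset s univ _ (subset_univ s) h.le, card_univ, h,
      if_neg (by omega), if_pos rfl, Nat.sub_self, Nat.choose_zero_right, mul_zero, zero_add]
  · rw [if_neg (by omega), if_neg (by omega), mul_zero, add_zero, card_eq_zero,
      filter_eq_empty_iff]
    intro I hI hsI
    have := card_le_card hsI
    rw [(mem_powersetCard.1 hI).2] at this
    omega

section Code

variable {F : Type*} [Field F] [DecidableEq F] {n k : ℕ}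

lemma hammingNorm_le_card_of_mem_suppCode {x : Fin n → F} {J : Finset (Fin n)}
    (hx : x ∈ suppCode F n J) : hammingNorm x ≤ #J :=
  card_le_card (mem_suppCode_iff.1 hx)

lemma finrank_inf_suppCode_eq_one (C : Submodule F (Fin n → F)) (hC : finrank F C = k)
    (hdual : ∀ x ∈ dualCode C, x ≠ 0 → k ≤ hammingNorm x) {I : Finset (Fin n)}
    (hI : #I = n - k + 1) : finrank F ↥(C ⊓ suppCode F n I) = 1 := by
  have hIn : #I ≤ n := by simpa using card_le_univ I
  have hdim := finrank_add_finrank_dualCode C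
  have hbot : dualCode C ⊓ suppCode F n Iᶜ = ⊥ := by
    refine (Submodule.eq_bot_iff _).2 fun x hx => ?_
    obtain ⟨hxD, hxS⟩ := Submodule.mem_inf.1 hx
    by_contra hx0
    have hle := hammingNorm_le_card_of_mem_suppCode hxS
    rw [card_compl, Fintype.card_fin] at hle
    have := hdual x hxD hx0
    omega
  have := finrank_inf_suppCode_add_of_dualCode_inf_eq_bot C I hbot
  omega

lemma ncard_setOf_hammingNorm_eq [Fintype F] (C : Submodule F (Fin n → F))
    [DecidablePred (· ∈ C)] {w : ℕ} (hw : w ≠ 0) :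
    {c ∈ (C : Set (Fin n → F)) | hammingNorm c = w}.ncard =
      #{c ∈ ({c | c ∈ C ∧ c ≠ 0} : Finset (Fin n → F)) | hammingNorm c = w} := by
  rw [← Set.ncard_coe_finset]
  congr 1
  ext c
  simp only [SetLike.mem_coe, coe_filter, mem_filter, mem_univ, true_and]
  refine ⟨fun ⟨hc, hw'⟩ => ⟨⟨hc, ?_⟩, hw'⟩, fun ⟨⟨hc, _⟩, hw'⟩ => ⟨hc, hw'⟩⟩
  rintro rfl
  rw [hammingNorm_zero] at hw'
  exact hw hw'.symm

lemma card_filter_mem_suppCode_powersetCard {c : Fin n → F} (hkn : k ≤ n)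
    (hc : n - k ≤ hammingNorm c) :
    #{I ∈ powersetCard (n - k + 1) univ | c ∈ suppCode F n I} =
      k * (if hammingNorm c = n - k then 1 else 0) +
        (if hammingNorm c = n - k + 1 then 1 else 0) := by
  have hwt : hammingNorm c = #({i | c i ≠ 0} : Finset (Fin n)) := rfl
  have := card_filter_powersetCard_superset (s := {i | c i ≠ 0}) (k := k)
    (by rwa [Fintype.card_fin]) (by rwa [Fintype.card_fin, ← hwt])
  simp_rw [Fintype.card_fin, ← hwt, ← mem_suppCode_iff] at this
  exact this

lemma card_filter_ne_zero_mem_suppCode [Fintype F] (C : Submodule F (Fin n → F))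
    [DecidablePred (· ∈ C)] (hC : finrank F C = k)
    (hdual : ∀ x ∈ dualCode C, x ≠ 0 → k ≤ hammingNorm x) {I : Finset (Fin n)}
    (hI : #I = n - k + 1) :
    #{c ∈ ({c | c ∈ C ∧ c ≠ 0} : Finset (Fin n → F)) | c ∈ suppCode F n I} =
      Fintype.card F - 1 := by
  classical
  have hcard := card_filter_mem_ne_zero (C ⊓ suppCode F n I)
  rw [finrank_inf_suppCode_eq_one C hC hdual hI, pow_one] at hcard
  rw [← hcard]
  congr 1
  ext c
  simp [Submodule.mem_inf, and_right_comm]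

end Code

/-- if an AMDS `[n,k,n-k]` code is near MDS then
`k·A_{n-k} + A_{n-k+1} = (q-1)·C(n, n-k+1)`. -/
theorem stmt4 {F : Type*} [Field F] [Fintype F] [DecidableEq F] {n k : ℕ}
    (C : Submodule F (Fin n → F)) (hC : IsAMDS F n k C) (hkn : k ≤ n)
    (hdual : IsAMDS F n (n - k) (dualCode C)) :
    k * {c ∈ (C : Set (Fin n → F)) | hammingNorm c = n - k}.ncard +
      {c ∈ (C : Set (Fin n → F)) | hammingNorm c = n - k + 1}.ncard =
    (Fintype.card F - 1) * n.choose (n - k + 1) := by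
  classical
  obtain ⟨hCk, hCd, c₀, -, hc₀, hc₀w⟩ := hC
  obtain ⟨-, hDd, -⟩ := hdual
  have hnk : n - k ≠ 0 := hc₀w ▸ mt hammingNorm_eq_zero.1 hc₀
  rw [Nat.sub_sub_self hkn] at hDd
  set S : Finset (Fin n → F) := {c | c ∈ C ∧ c ≠ 0}
  set P := powersetCard (n - k + 1) (univ : Finset (Fin n))
  have hcount := sum_card_bipartiteAbove_eq_sum_card_bipartiteBelow (s := S) (t := P)
    (r := fun c I => c ∈ suppCode F n I)
  have habove : ∀ c ∈ S, #(P.bipartiteAbove (fun c I => c ∈ suppCode F n I) c) =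
      k * (if hammingNorm c = n - k then 1 else 0) +
        (if hammingNorm c = n - k + 1 then 1 else 0) := fun c hc =>
    card_filter_mem_suppCode_powersetCard hkn (hCd c (mem_filter.1 hc).2.1 (mem_filter.1 hc).2.2)
  have hbelow : ∀ I ∈ P, #(S.bipartiteBelow (fun c I => c ∈ suppCode F n I) I) =
      Fintype.card F - 1 := fun I hI =>
    card_filter_ne_zero_mem_suppCode C hCk hDd (mem_powersetCard.1 hI).2
  rw [sum_congr rfl habove, sum_congr rfl hbelow, sum_add_distrib, ← mul_sum, ← card_filter,
    ← card_filter, sum_const, card_powersetCard, card_univ, Fintype.card_fin, smul_eq_mul] at hcount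
  rw [ncard_setOf_hammingNorm_eq C hnk, ncard_setOf_hammingNorm_eq C (Nat.succ_ne_zero _), hcount,
    mul_comm]
end

section
/- Let q = 3^m with m a positive integer, and let U_{q+1} ⊆ F_{q^2}^× be the group of (q+1)-th roots of unity. For x, y ∈ U_{q+1}, one has x + y + xy = 0 if and only if x + y + 1 = 0, and either condition holds if and only if x = y = 1. -/
/-!
Raising to the power `q = 3 ^ m` is an injective ring endomorphism that inverts every element
of `U_{q+1}`, so it sends `x + y + x y` to `x⁻¹ + y⁻¹ + x⁻¹ y⁻¹ = (x + y + 1) / (x y)`; hence the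
two equations are equivalent. When both hold, `x + y = -1` and `x y = 1`, so `x` and `y` are roots
of `t ^ 2 + t + 1`, which in characteristic `3` is `(t - 1) ^ 2`.
-/

theorem pow_eq_inv_of_pow_succ_eq_one {G₀ : Type*} [GroupWithZero G₀] {x : G₀} {n : ℕ}
    (h : x ^ (n + 1) = 1) : x ^ n = x⁻¹ :=
  eq_inv_of_mul_eq_one_left (by rwa [← pow_succ])

section FrobeniusOnUnitCircle

variable {K : Type*} [Field K] (p : ℕ) [ExpChar K p] {n : ℕ} {x y : K}

theorem add_add_mul_pow_mul_eq_add_add_one (hx : x ^ (p ^ n + 1) = 1)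
    (hy : y ^ (p ^ n + 1) = 1) : (x + y + x * y) ^ p ^ n * (x * y) = x + y + 1 := by
  have hx0 : x ≠ 0 := by rintro rfl; simp at hx
  have hy0 : y ≠ 0 := by rintro rfl; simp at hy
  rw [add_pow_expChar_pow, add_pow_expChar_pow, mul_pow, pow_eq_inv_of_pow_succ_eq_one hx,
    pow_eq_inv_of_pow_succ_eq_one hy]
  field_simp
  ring

theorem add_add_mul_eq_zero_iff_add_add_one_eq_zero (hx : x ^ (p ^ n + 1) = 1)
    (hy : y ^ (p ^ n + 1) = 1) : x + y + x * y = 0 ↔ x + y + 1 = 0 := by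
  have hxy : x * y ≠ 0 := by
    refine mul_ne_zero ?_ ?_ <;> rintro rfl <;> simp at hx hy
  rw [← add_add_mul_pow_mul_eq_add_add_one p hx hy, mul_eq_zero, or_iff_left hxy,
    pow_eq_zero_iff (expChar_pow_pos K p n).ne']

end FrobeniusOnUnitCircle

theorem eq_one_of_add_add_one_eq_zero_of_mul_eq_one {R : Type*} [CommRing R] [NoZeroDivisors R]
    [CharP R 3] {x y : R} (hsum : x + y + 1 = 0) (hprod : x * y = 1) : x = 1 ∧ y = 1 := by
  have h3 : (3 : R) = 0 := CharP.ofNat_eq_zero R 3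
  have hx : (x - 1) ^ 2 = 0 := by linear_combination x * hsum - hprod - x * h3
  have hy : (y - 1) ^ 2 = 0 := by linear_combination y * hsum - hprod - y * h3
  exact ⟨sub_eq_zero.mp (pow_eq_zero_iff two_ne_zero |>.mp hx),
    sub_eq_zero.mp (pow_eq_zero_iff two_ne_zero |>.mp hy)⟩

theorem stmt8_general {E : Type*} [Field E] [Fintype E] (m : ℕ)
    (hE : Fintype.card E = (3 ^ m) ^ 2)
    (x y : E) (hx : x ^ (3 ^ m + 1) = 1) (hy : y ^ (3 ^ m + 1) = 1) :
    (x + y + x * y = 0 ↔ x + y + 1 = 0) ∧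
    (x + y + 1 = 0 ↔ (x = 1 ∧ y = 1)) := by
  have : Fact (Nat.Prime 3) := ⟨Nat.prime_three⟩
  have : CharP E 3 := charP_of_card_eq_prime_pow (f := m * 2) (by rw [hE, pow_mul])
  have hequiv := add_add_mul_eq_zero_iff_add_add_one_eq_zero 3 hx hy
  refine ⟨hequiv, fun hsum => ?_, ?_⟩
  · exact eq_one_of_add_add_one_eq_zero_of_mul_eq_one hsum
      (by linear_combination hequiv.mpr hsum - hsum)
  · rintro ⟨rfl, rfl⟩
    linear_combination CharP.ofNat_eq_zero E 3

/-- for `x, y` in the group of `(q+1)`-th roots of unity of `F_{q^2}`,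
`q = 3^m`: `x+y+xy = 0 ↔ x+y+1 = 0 ↔ (x = 1 ∧ y = 1)`. -/
theorem stmt8 {E : Type*} [Field E] [Fintype E] (m : ℕ) (hm : 0 < m)
    (hE : Fintype.card E = (3 ^ m) ^ 2)
    (x y : E) (hx : x ^ (3 ^ m + 1) = 1) (hy : y ^ (3 ^ m + 1) = 1) :
    (x + y + x * y = 0 ↔ x + y + 1 = 0) ∧
    (x + y + 1 = 0 ↔ (x = 1 ∧ y = 1)) :=
  stmt8_general m hE x y hx hy
end

section
/- Let q = 3^m with m an odd positive integer and let U_{q+1} be the group of (q+1)-th roots of unity in F_{q^2}. If x, y, z are three pairwise distinct elements of U_{q+1}, then the 3×3 matrix with rows (x^4, y^4, z^4), (x^5, y^5, z^5), (x^{-5}, y^{-5}, z^{-5}) has nonzero determinant in F_{q^2}. -/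
/-!
Passing to `a = x⁻¹` and scaling columns, the determinant becomes
`S(a, b, c) = a¹⁰(b - c) + b¹⁰(c - a) + c¹⁰(a - b)`, which vanishes iff the points `(u, u¹⁰)` for
`u = a, b, c` are collinear. Since `gcd(10, q + 1) = 2`, equal tenth powers force `a = ±b`, which
rules out vertical lines. On a line `u¹⁰ = λu + μ`, applying `u ↦ u^q = u⁻¹` gives the additive
relation `λ^q u⁹ + λμ^q u = const`, so all differences of `a, b, c` have the same eighth power and
`t = (c - a)/(b - a)` lies in `𝔽₉`. Since `m` is odd, `s^q = s³` on `𝔽₉`; the norm equations of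
`a, a + d, a + t d` then force `a/d ∈ 𝔽₉`. But on `𝔽₉` the curve is the parabola `u ↦ u²`, on which
no three points are collinear.
-/

theorem Nat.gcd_ten_three_pow_add_one {m : ℕ} (hm : Odd m) : Nat.gcd 10 (3 ^ m + 1) = 2 := by
  obtain ⟨k, rfl⟩ := hm
  have h : 3 ^ (2 * k + 1) % 10 = 3 ∨ 3 ^ (2 * k + 1) % 10 = 7 := by
    induction k with
    | zero => decide
    | succ k ih =>
      rw [show 2 * (k + 1) + 1 = 2 * k + 1 + 2 by ring, pow_add, Nat.mul_mod]
      rcases ih with h | h <;> simp [h]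
  rw [Nat.gcd_rec, Nat.add_mod]
  rcases h with h | h <;> simp [h]

theorem pow_three_pow_of_odd {M : Type*} [Monoid M] {s : M} (hs : s ^ 9 = s) {m : ℕ}
    (hm : Odd m) : s ^ 3 ^ m = s ^ 3 := by
  obtain ⟨k, rfl⟩ := hm
  have h9 : ∀ k, s ^ 9 ^ k = s := fun k => by
    induction k with
    | zero => simp
    | succ k ih => rw [pow_succ, pow_mul, ih, hs]
  rw [pow_succ, pow_mul, pow_mul, show 3 ^ 2 = 9 by rfl, h9]

theorem ne_zero_of_pow_succ_eq_one {M : Type*} [MonoidWithZero M] [Nontrivial M] {u : M} {q : ℕ}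
    (hu : u ^ (q + 1) = 1) : u ≠ 0 := by
  rintro rfl
  simp at hu

section

variable {E : Type*} [Field E]

theorem eq_or_eq_neg_of_pow_eq {n q : ℕ} (hnq : Nat.gcd n (q + 1) = 2) {u v : E}
    (hu : u ^ (q + 1) = 1) (hv : v ^ (q + 1) = 1) (h : u ^ n = v ^ n) : u = v ∨ u = -v := by
  have hv0 := ne_zero_of_pow_succ_eq_one hv
  have hr : (u / v) ^ Nat.gcd n (q + 1) = 1 := pow_gcd_eq_one.2
    ⟨by rw [div_pow, h, div_self (pow_ne_zero _ hv0)], by rw [div_pow, hu, hv, div_one]⟩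
  rw [hnq, div_pow, div_eq_one_iff_eq (pow_ne_zero 2 hv0)] at hr
  exact sq_eq_sq_iff_eq_or_eq_neg.1 hr

theorem pow_ten_ne_pow_ten_of_pow_ten_mul_sub_add_eq_zero {q : ℕ}
    (hq : Nat.gcd 10 (q + 1) = 2) {a b c : E}
    (ha : a ^ (q + 1) = 1) (hb : b ^ (q + 1) = 1) (hc : c ^ (q + 1) = 1)
    (hab : a ≠ b) (hac : a ≠ c) (hbc : b ≠ c)
    (hS : a ^ 10 * (b - c) + b ^ 10 * (c - a) + c ^ 10 * (a - b) = 0) : a ^ 10 ≠ b ^ 10 := by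
  intro h
  have hba : b = -a := (eq_or_eq_neg_of_pow_eq hq hb ha h.symm).resolve_left hab.symm
  have hca : c ^ 10 = a ^ 10 := by
    have : (a - b) * (c ^ 10 - a ^ 10) = 0 := by linear_combination hS + (c - a) * h
    exact sub_eq_zero.1 ((mul_eq_zero.1 this).resolve_left (sub_ne_zero.2 hab))
  rcases eq_or_eq_neg_of_pow_eq hq hc ha hca with h' | h'
  · exact hac h'.symm
  · exact hbc (hba.trans h'.symm)

theorem pow_ten_mul_sub_add_ne_zero_of_pow_nine_eq {a b c : E} (ha : a ^ 9 = a)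
    (hb : b ^ 9 = b) (hc : c ^ 9 = c) (hab : a ≠ b) (hac : a ≠ c) (hbc : b ≠ c) :
    a ^ 10 * (b - c) + b ^ 10 * (c - a) + c ^ 10 * (a - b) ≠ 0 := by
  have h10 : ∀ u : E, u ^ 9 = u → u ^ 10 = u ^ 2 := fun u hu => by rw [pow_succ, hu, sq]
  rw [h10 a ha, h10 b hb, h10 c hc,
    show a ^ 2 * (b - c) + b ^ 2 * (c - a) + c ^ 2 * (a - b) = (a - b) * (a - c) * (b - c) by ring]
  exact mul_ne_zero (mul_ne_zero (sub_ne_zero.2 hab) (sub_ne_zero.2 hac)) (sub_ne_zero.2 hbc)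

theorem one_eq_of_pow_succ_eq_linear {p k n : ℕ} [ExpChar E p] {u lam mu : E}
    (hu : u ^ (p ^ k + 1) = 1) (h : u ^ (n + 1) = lam * u + mu) :
    lam ^ p ^ k * u ^ n + mu ^ p ^ k * (lam * u + mu) = 1 := by
  have hu0 := ne_zero_of_pow_succ_eq_one hu
  have hq : u ^ p ^ k = u⁻¹ := eq_inv_of_mul_eq_one_left (by rwa [← pow_succ])
  have hfrob : (u ^ (n + 1)) ^ p ^ k = lam ^ p ^ k * u ^ p ^ k + mu ^ p ^ k := by
    rw [h, add_pow_expChar_pow, mul_pow]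
  rw [pow_right_comm, hq, inv_pow] at hfrob
  field_simp at hfrob
  rw [← h]
  apply mul_left_cancel₀ hu0
  rw [pow_succ] at hfrob ⊢
  linear_combination -hfrob

section CharThree

variable [CharP E 3]

theorem pow_eight_sub_eq_of_pow_ten_eq_linear {k : ℕ} {u v lam mu : E}
    (hu : u ^ (3 ^ k + 1) = 1) (hv : v ^ (3 ^ k + 1) = 1)
    (hu' : u ^ 10 = lam * u + mu) (hv' : v ^ 10 = lam * v + mu) (huv : u ≠ v) :
    lam ^ 3 ^ k * (u - v) ^ 8 = -(lam * mu ^ 3 ^ k) := by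
  have hu1 := one_eq_of_pow_succ_eq_linear (n := 9) hu hu'
  have hv1 := one_eq_of_pow_succ_eq_linear (n := 9) hv hv'
  have h9 : (u - v) ^ 9 = u ^ 9 - v ^ 9 := sub_pow_char_pow (p := 3) (n := 2) u v
  apply mul_left_cancel₀ (sub_ne_zero.2 huv)
  linear_combination hu1 - hv1 + lam ^ 3 ^ k * h9

theorem div_sub_pow_nine_eq_of_pow_ten_eq_linear {k : ℕ} {a b c lam mu : E} (hlam : lam ≠ 0)
    (ha : a ^ (3 ^ k + 1) = 1) (hb : b ^ (3 ^ k + 1) = 1) (hc : c ^ (3 ^ k + 1) = 1)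
    (ha' : a ^ 10 = lam * a + mu) (hb' : b ^ 10 = lam * b + mu) (hc' : c ^ 10 = lam * c + mu)
    (hab : a ≠ b) (hac : a ≠ c) :
    ((c - a) / (b - a)) ^ 9 = (c - a) / (b - a) := by
  have h8 : (a - b) ^ 8 = (a - c) ^ 8 := mul_left_cancel₀ (pow_ne_zero (3 ^ k) hlam) <|
    (pow_eight_sub_eq_of_pow_ten_eq_linear ha hb ha' hb' hab).trans
      (pow_eight_sub_eq_of_pow_ten_eq_linear ha hc ha' hc' hac).symm
  have h8' : ((c - a) / (b - a)) ^ 8 = 1 := by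
    rw [div_pow, div_eq_one_iff_eq (pow_ne_zero _ (sub_ne_zero.2 hab.symm))]
    linear_combination -h8
  rw [pow_succ, h8', one_mul]

theorem one_add_mul_add_one_sub_sq_mul_eq_zero {m : ℕ} (hm : Odd m) {a d t : E}
    (ha : a ^ (3 ^ m + 1) = 1) (hb : (a + d) ^ (3 ^ m + 1) = 1)
    (hc : (a + t * d) ^ (3 ^ m + 1) = 1) (ht : t ^ 9 = t) (ht0 : t ≠ 0) (ht1 : t ≠ 1)
    (hd : d ≠ 0) :
    (1 + t) * a + (1 - t) ^ 2 * d = 0 := by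
  have h3 : (3 : E) = 0 := CharP.cast_eq_zero E 3
  have expand : ∀ s : E, s ^ 9 = s → (a + s * d) ^ (3 ^ m + 1) = 1 →
      s * (a ^ 3 ^ m * d) + s ^ 3 * (a * d ^ 3 ^ m) + s ^ 4 * (d ^ 3 ^ m * d) = 0 := by
    intro s hs h
    rw [pow_succ, add_pow_char_pow, mul_pow, pow_three_pow_of_odd hs hm] at h
    rw [pow_succ] at ha
    linear_combination h - ha
  have h1 := expand 1 (one_pow 9) (by rwa [one_mul])
  have h2 := expand t ht hc
  -- `t` times the first relation minus the second eliminates `a^q d`; in characteristic 3,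
  -- `t - t⁴ = t(1 - t)³`.
  have key : (t * (1 - t) * d ^ 3 ^ m) * ((1 + t) * a + (1 - t) ^ 2 * d) = 0 := by
    linear_combination t * h1 - h2 + (t ^ 3 - t ^ 2) * d ^ 3 ^ m * d * h3
  refine (mul_eq_zero.1 key).resolve_left (mul_ne_zero (mul_ne_zero ht0 ?_) (pow_ne_zero _ hd))
  exact sub_ne_zero.2 (Ne.symm ht1)

theorem div_pow_nine_eq_self_of_one_add_mul_add_one_sub_sq_mul_eq_zero {a d t : E}
    (ht : t ^ 9 = t) (hd : d ≠ 0) (h : (1 + t) * a + (1 - t) ^ 2 * d = 0) :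
    (a / d) ^ 9 = a / d := by
  have h3 : (3 : E) = 0 := CharP.cast_eq_zero E 3
  have ht' : 1 + t ≠ 0 := by
    rintro ht'
    obtain rfl : t = -1 := by linear_combination ht'
    exact hd (by linear_combination h - d * h3)
  have had : a / d = -(1 - t) ^ 2 / (1 + t) := by
    rw [div_eq_div_iff hd ht']
    linear_combination h
  change iterateFrobenius E 3 2 (a / d) = a / d
  rw [had]
  simp only [map_div₀, map_neg, map_pow, map_sub, map_add, map_one]
  rw [show iterateFrobenius E 3 2 t = t from ht]

theorem pow_ten_mul_sub_add_ne_zero_of_div_pow_nine_eq_self {a d t : E}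
    (had : (a / d) ^ 9 = a / d) (ht : t ^ 9 = t) (ht0 : t ≠ 0) (ht1 : t ≠ 1) (hd : d ≠ 0) :
    a ^ 10 * ((a + d) - (a + t * d)) + (a + d) ^ 10 * ((a + t * d) - a)
      + (a + t * d) ^ 10 * (a - (a + d)) ≠ 0 := by
  set r := a / d
  have hfrob : ∀ s : E, s ^ 9 = s → (r + s) ^ 9 = r + s := fun s hs => by
    change iterateFrobenius E 3 2 (r + s) = r + s
    rw [map_add]
    exact congrArg₂ _ had hs
  have hscale : a ^ 10 * ((a + d) - (a + t * d)) + (a + d) ^ 10 * ((a + t * d) - a)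
      + (a + t * d) ^ 10 * (a - (a + d))
      = d ^ 11 * (r ^ 10 * ((r + 1) - (r + t)) + (r + 1) ^ 10 * ((r + t) - r)
        + (r + t) ^ 10 * (r - (r + 1))) := by
    rw [show a = r * d from (div_mul_cancel₀ a hd).symm]
    ring
  rw [hscale]
  refine mul_ne_zero (pow_ne_zero _ hd) (pow_ten_mul_sub_add_ne_zero_of_pow_nine_eq had
    (hfrob 1 (one_pow 9)) (hfrob t ht) ?_ ?_ ?_)
  · simp
  · simpa using ht0
  · simpa using Ne.symm ht1

theorem pow_ten_mul_sub_add_ne_zero {m : ℕ} (hm : Odd m) {a b c : E}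
    (ha : a ^ (3 ^ m + 1) = 1) (hb : b ^ (3 ^ m + 1) = 1) (hc : c ^ (3 ^ m + 1) = 1)
    (hab : a ≠ b) (hac : a ≠ c) (hbc : b ≠ c) :
    a ^ 10 * (b - c) + b ^ 10 * (c - a) + c ^ 10 * (a - b) ≠ 0 := by
  intro hS
  have h10 := pow_ten_ne_pow_ten_of_pow_ten_mul_sub_add_eq_zero
    (Nat.gcd_ten_three_pow_add_one hm) ha hb hc hab hac hbc hS
  obtain ⟨lam, hlam⟩ : ∃ lam, lam * (a - b) = a ^ 10 - b ^ 10 :=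
    ⟨_, div_mul_cancel₀ _ (sub_ne_zero.2 hab)⟩
  have hlam0 : lam ≠ 0 := by
    rintro rfl
    exact h10 (by linear_combination -hlam)
  have hb' : b ^ 10 = lam * b + (a ^ 10 - lam * a) := by linear_combination hlam
  have hc' : c ^ 10 = lam * c + (a ^ 10 - lam * a) := by
    apply mul_left_cancel₀ (sub_ne_zero.2 hab)
    linear_combination hS - (c - a) * hb'
  have ht := div_sub_pow_nine_eq_of_pow_ten_eq_linear hlam0 ha hb hc (by ring) hb' hc' hab hac
  obtain ⟨d, rfl⟩ : ∃ d, b = a + d := ⟨b - a, by ring⟩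
  have hd : d ≠ 0 := by
    rintro rfl
    simp at hab
  obtain ⟨t, rfl⟩ : ∃ t, c = a + t * d := ⟨(c - a) / d, by field_simp; ring⟩
  rw [add_sub_cancel_left, add_sub_cancel_left, mul_div_cancel_right₀ _ hd] at ht
  have ht0 : t ≠ 0 := by
    rintro rfl
    simp at hac
  have ht1 : t ≠ 1 := by
    rintro rfl
    simp at hbc
  have had := div_pow_nine_eq_self_of_one_add_mul_add_one_sub_sq_mul_eq_zero ht hd
    (one_add_mul_add_one_sub_sq_mul_eq_zero hm ha hb hc ht ht0 ht1 hd)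
  exact pow_ten_mul_sub_add_ne_zero_of_div_pow_nine_eq_self had ht ht0 ht1 hd hS

end CharThree

theorem det_pow_four_pow_five_zpow_neg_five {x y z : E} (hx : x ≠ 0) (hy : y ≠ 0) (hz : z ≠ 0) :
    Matrix.det !![x ^ 4, y ^ 4, z ^ 4; x ^ 5, y ^ 5, z ^ 5;
      x ^ (-5 : ℤ), y ^ (-5 : ℤ), z ^ (-5 : ℤ)]
      = (x * y * z) ^ 5 * (x⁻¹ ^ 10 * (y⁻¹ - z⁻¹) + y⁻¹ ^ 10 * (z⁻¹ - x⁻¹)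
        + z⁻¹ ^ 10 * (x⁻¹ - y⁻¹)) := by
  simp only [Int.reduceNeg, zpow_neg, zpow_ofNat, Matrix.det_fin_three, Fin.isValue,
    Matrix.of_apply, Matrix.cons_val', Matrix.cons_val_zero, Matrix.cons_val_fin_one,
    Matrix.cons_val_one, Matrix.cons_val, inv_pow]
  field_simp
  ring

end

/-- for pairwise distinct `x, y, z ∈ U_{q+1}`, `q = 3^m` with `m` odd,
the matrix with rows `(x⁴,y⁴,z⁴)`, `(x⁵,y⁵,z⁵)`, `(x⁻⁵,y⁻⁵,z⁻⁵)` is nonsingular. -/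
theorem stmt11 {E : Type*} [Field E] [Fintype E] (m : ℕ) (hm : Odd m)
    (hE : Fintype.card E = (3 ^ m) ^ 2)
    (x y z : E) (hx : x ^ (3 ^ m + 1) = 1) (hy : y ^ (3 ^ m + 1) = 1)
    (hz : z ^ (3 ^ m + 1) = 1)
    (hxy : x ≠ y) (hxz : x ≠ z) (hyz : y ≠ z) :
    Matrix.det !![x ^ 4, y ^ 4, z ^ 4;
                  x ^ 5, y ^ 5, z ^ 5;
                  x ^ (-5 : ℤ), y ^ (-5 : ℤ), z ^ (-5 : ℤ)] ≠ 0 := by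
  have : CharP E 3 := charP_of_card_eq_prime_pow (hE.trans (pow_mul 3 m 2).symm)
  have hinv : ∀ u : E, u ^ (3 ^ m + 1) = 1 → u⁻¹ ^ (3 ^ m + 1) = 1 := fun u hu => by
    rw [inv_pow, hu, inv_one]
  have hx0 := ne_zero_of_pow_succ_eq_one hx
  have hy0 := ne_zero_of_pow_succ_eq_one hy
  have hz0 := ne_zero_of_pow_succ_eq_one hz
  rw [det_pow_four_pow_five_zpow_neg_five hx0 hy0 hz0]
  exact mul_ne_zero (pow_ne_zero _ (mul_ne_zero (mul_ne_zero hx0 hy0) hz0))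
    (pow_ten_mul_sub_add_ne_zero hm (hinv x hx) (hinv y hy) (hinv z hz)
      (inv_injective.ne hxy) (inv_injective.ne hxz) (inv_injective.ne hyz))
end

section
/- Let q = 3^m with m a positive integer and let x, y, z be pairwise distinct elements of U_{q+1}\{1} in F_{q^2}. Writing X = x-1, Y = y-1, Z = z-1, the determinant of the 4×4 matrix with rows (x^4, y^4, z^4, 1), (x^5, y^5, z^5, 1), (x^{-5}, y^{-5}, z^{-5}, 1), (x^{-4}, y^{-4}, z^{-4}, 1) equals XYZ / ((X+1)(Y+1)(Z+1))^5 times the determinant of the 2×2 matrix with rows (Y^9 - X^9, Z^9 - X^9) and (Y^8 - X^8, Z^8 - X^8). -/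
/-!
Multiplying the columns by `x⁵, y⁵, z⁵` clears the negative exponents and turns the rows into
`(x⁹, x¹⁰, 1, x)`. In characteristic 3 we have `x⁹ = X⁹ + 1` and `x¹⁰ = (X⁹ + 1)(X + 1)`, so
subtracting the row of ones leaves the rows `X⁹, X¹⁰ + X⁹ + X, X`, and the determinant reduces
to `XYZ` times a 2×2 determinant in `X⁸, X⁹`.
-/

open Matrix

theorem det_frobenius_rows {R : Type*} [CommRing R] [CharP R 3] (x y z : R) :
    det !![x ^ 9, y ^ 9, z ^ 9, 1; x ^ 10, y ^ 10, z ^ 10, 1; 1, 1, 1, 1; x, y, z, 1] =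
      (x - 1) * (y - 1) * (z - 1) *
        det !![(y - 1) ^ 9 - (x - 1) ^ 9, (z - 1) ^ 9 - (x - 1) ^ 9;
               (y - 1) ^ 8 - (x - 1) ^ 8, (z - 1) ^ 8 - (x - 1) ^ 8] := by
  have frobenius : ∀ a : R, (a + 1) ^ 9 = a ^ 9 + 1 := fun a => by
    simpa using add_pow_char_pow (R := R) (x := a) (y := 1) (p := 3) (n := 2)
  obtain ⟨a, rfl⟩ : ∃ a, x = a + 1 := ⟨x - 1, by ring⟩
  obtain ⟨b, rfl⟩ : ∃ b, y = b + 1 := ⟨y - 1, by ring⟩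
  obtain ⟨c, rfl⟩ : ∃ c, z = c + 1 := ⟨z - 1, by ring⟩
  simp only [pow_succ _ 9, frobenius, add_sub_cancel_right]
  simp [det_succ_row_zero, Fin.sum_univ_succ, Fin.succAbove]
  ring

theorem det_zpow_cols_mul_pow_five {K : Type*} [Field K] {x y z : K}
    (hx : x ≠ 0) (hy : y ≠ 0) (hz : z ≠ 0) :
    det !![x ^ 4, y ^ 4, z ^ 4, 1;
           x ^ 5, y ^ 5, z ^ 5, 1;
           x ^ (-5 : ℤ), y ^ (-5 : ℤ), z ^ (-5 : ℤ), 1;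
           x ^ (-4 : ℤ), y ^ (-4 : ℤ), z ^ (-4 : ℤ), 1] * (x * y * z) ^ 5 =
      det !![x ^ 9, y ^ 9, z ^ 9, 1; x ^ 10, y ^ 10, z ^ 10, 1; 1, 1, 1, 1; x, y, z, 1] := by
  rw [mul_comm, show (x * y * z) ^ 5 = ∏ j, ![x ^ 5, y ^ 5, z ^ 5, (1 : K)] j by
    simp [Fin.prod_univ_four]; ring, ← det_mul_row]
  congr 1
  ext i j
  fin_cases i <;> fin_cases j <;> simp [_root_.zpow_neg] <;> field_simp

theorem stmt12_general {E : Type*} [Field E] [Fintype E] (m : ℕ)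
    (hE : Fintype.card E = (3 ^ m) ^ 2)
    (x y z : E) (hx : x ^ (3 ^ m + 1) = 1) (hy : y ^ (3 ^ m + 1) = 1)
    (hz : z ^ (3 ^ m + 1) = 1) :
    Matrix.det !![x ^ 4, y ^ 4, z ^ 4, 1;
                  x ^ 5, y ^ 5, z ^ 5, 1;
                  x ^ (-5 : ℤ), y ^ (-5 : ℤ), z ^ (-5 : ℤ), 1;
                  x ^ (-4 : ℤ), y ^ (-4 : ℤ), z ^ (-4 : ℤ), 1] =
      (x - 1) * (y - 1) * (z - 1) / (x * y * z) ^ 5 *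
        Matrix.det !![(y - 1) ^ 9 - (x - 1) ^ 9, (z - 1) ^ 9 - (x - 1) ^ 9;
                      (y - 1) ^ 8 - (x - 1) ^ 8, (z - 1) ^ 8 - (x - 1) ^ 8] := by
  have : CharP E 3 := charP_of_card_eq_prime_pow (hE.trans (pow_mul 3 m 2).symm)
  have hx0 : x ≠ 0 := fun h => by simp [h] at hx
  have hy0 : y ≠ 0 := fun h => by simp [h] at hy
  have hz0 : z ≠ 0 := fun h => by simp [h] at hz
  rw [div_mul_eq_mul_div, eq_div_iff (by simp [hx0, hy0, hz0]),
    det_zpow_cols_mul_pow_five hx0 hy0 hz0, det_frobenius_rows]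

/-- the 4×4 determinant factorization, with `X = x-1`, `Y = y-1`,
`Z = z-1` (so `X+1 = x`, etc.). -/
theorem stmt12 {E : Type*} [Field E] [Fintype E] (m : ℕ) (hm : 0 < m)
    (hE : Fintype.card E = (3 ^ m) ^ 2)
    (x y z : E) (hx : x ^ (3 ^ m + 1) = 1) (hy : y ^ (3 ^ m + 1) = 1)
    (hz : z ^ (3 ^ m + 1) = 1)
    (hx1 : x ≠ 1) (hy1 : y ≠ 1) (hz1 : z ≠ 1)
    (hxy : x ≠ y) (hxz : x ≠ z) (hyz : y ≠ z) :
    Matrix.det !![x ^ 4, y ^ 4, z ^ 4, 1;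
                  x ^ 5, y ^ 5, z ^ 5, 1;
                  x ^ (-5 : ℤ), y ^ (-5 : ℤ), z ^ (-5 : ℤ), 1;
                  x ^ (-4 : ℤ), y ^ (-4 : ℤ), z ^ (-4 : ℤ), 1] =
      (x - 1) * (y - 1) * (z - 1) / (x * y * z) ^ 5 *
        Matrix.det !![(y - 1) ^ 9 - (x - 1) ^ 9, (z - 1) ^ 9 - (x - 1) ^ 9;
                      (y - 1) ^ 8 - (x - 1) ^ 8, (z - 1) ^ 8 - (x - 1) ^ 8] :=
  stmt12_general m hE x y z hx hy hz
end

section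
/- Let q = 3^m with m a positive integer and let x, y, z be pairwise distinct elements of U_{q+1}\{1} in F_{q^2}. With X = x-1, Y = y-1, Z = z-1, the 4×4 determinant det[(x^4,y^4,z^4,1);(x^5,y^5,z^5,1);(x^{-5},y^{-5},z^{-5},1);(x^{-4},y^{-4},z^{-4},1)] vanishes in F_{q^2} if and only if the 2×2 determinant (Y^9 - X^9)(Z^8 - X^8) - (Z^9 - X^9)(Y^8 - X^8) vanishes in F_{q^2}. -/
/-!
Multiplying the columns of the 4×4 matrix by `x⁵, y⁵, z⁵, 1` turns its rows into
`x⁹, x¹⁰, 1, x`. In characteristic 3 the substitution `x = X + 1` gives `x⁹ = X⁹ + 1`, and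
row operations reduce the determinant to `XYZ` times the 2×2 determinant. The scalar factors
`(xyz)⁵` and `XYZ` are nonzero since `x, y, z` are roots of unity different from `1`.
-/

theorem det_pow_nine_add_one_rows {R : Type*} [CommRing R] (X Y Z : R) :
    Matrix.det !![X ^ 9 + 1, Y ^ 9 + 1, Z ^ 9 + 1, 1;
                  (X ^ 9 + 1) * (X + 1), (Y ^ 9 + 1) * (Y + 1), (Z ^ 9 + 1) * (Z + 1), 1;
                  1, 1, 1, 1;
                  X + 1, Y + 1, Z + 1, 1] =
      X * Y * Z * ((Y ^ 9 - X ^ 9) * (Z ^ 8 - X ^ 8) - (Z ^ 9 - X ^ 9) * (Y ^ 8 - X ^ 8)) := by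
  simp only [Matrix.det_succ_row_zero, Fin.sum_univ_succ, Matrix.submatrix_apply]
  simp [Fin.succAbove, Fin.lt_def]
  ring

theorem add_one_pow_nine {R : Type*} [CommRing R] [CharP R 3] (X : R) :
    (X + 1) ^ 9 = X ^ 9 + 1 := by
  simpa using add_pow_char_pow (p := 3) (n := 2) X 1

theorem det_pow_nine_pow_ten_rows {R : Type*} [CommRing R] [CharP R 3] (x y z : R) :
    Matrix.det !![x ^ 9, y ^ 9, z ^ 9, 1;
                  x ^ 10, y ^ 10, z ^ 10, 1;
                  1, 1, 1, 1;
                  x, y, z, 1] =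
      (x - 1) * (y - 1) * (z - 1) *
        (((y - 1) ^ 9 - (x - 1) ^ 9) * ((z - 1) ^ 8 - (x - 1) ^ 8) -
          ((z - 1) ^ 9 - (x - 1) ^ 9) * ((y - 1) ^ 8 - (x - 1) ^ 8)) := by
  obtain ⟨X, rfl⟩ : ∃ X, x = X + 1 := ⟨x - 1, by ring⟩
  obtain ⟨Y, rfl⟩ : ∃ Y, y = Y + 1 := ⟨y - 1, by ring⟩
  obtain ⟨Z, rfl⟩ : ∃ Z, z = Z + 1 := ⟨z - 1, by ring⟩
  have pow_ten (t : R) : t ^ 10 = t ^ 9 * t := pow_succ t 9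
  simp only [add_sub_cancel_right, pow_ten, add_one_pow_nine]
  exact det_pow_nine_add_one_rows X Y Z

theorem det_mul_pow_five_columns {K : Type*} [Field K] {x y z : K}
    (hx : x ≠ 0) (hy : y ≠ 0) (hz : z ≠ 0) :
    (x * y * z) ^ 5 *
      Matrix.det !![x ^ 4, y ^ 4, z ^ 4, 1;
                    x ^ 5, y ^ 5, z ^ 5, 1;
                    x ^ (-5 : ℤ), y ^ (-5 : ℤ), z ^ (-5 : ℤ), 1;
                    x ^ (-4 : ℤ), y ^ (-4 : ℤ), z ^ (-4 : ℤ), 1] =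
      Matrix.det !![x ^ 9, y ^ 9, z ^ 9, 1;
                    x ^ 10, y ^ 10, z ^ 10, 1;
                    1, 1, 1, 1;
                    x, y, z, 1] := by
  have hprod : (x * y * z) ^ 5 = ∏ j, ![x ^ 5, y ^ 5, z ^ 5, 1] j := by
    simp [Fin.prod_univ_four, mul_pow]
  rw [hprod, ← Matrix.det_mul_row]
  congr 1
  ext i j
  fin_cases i <;> fin_cases j <;> simp [zpow_neg] <;> field_simp

theorem stmt13_general {E : Type*} [Field E] [Fintype E] (m : ℕ)
    (hE : Fintype.card E = (3 ^ m) ^ 2)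
    (x y z : E) (hx : x ^ (3 ^ m + 1) = 1) (hy : y ^ (3 ^ m + 1) = 1)
    (hz : z ^ (3 ^ m + 1) = 1)
    (hx1 : x ≠ 1) (hy1 : y ≠ 1) (hz1 : z ≠ 1) :
    Matrix.det !![x ^ 4, y ^ 4, z ^ 4, 1;
                  x ^ 5, y ^ 5, z ^ 5, 1;
                  x ^ (-5 : ℤ), y ^ (-5 : ℤ), z ^ (-5 : ℤ), 1;
                  x ^ (-4 : ℤ), y ^ (-4 : ℤ), z ^ (-4 : ℤ), 1] = 0 ↔
    ((y - 1) ^ 9 - (x - 1) ^ 9) * ((z - 1) ^ 8 - (x - 1) ^ 8) -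
      ((z - 1) ^ 9 - (x - 1) ^ 9) * ((y - 1) ^ 8 - (x - 1) ^ 8) = 0 := by
  have : CharP E 3 := charP_of_card_eq_prime_pow (hE.trans (pow_mul 3 m 2).symm)
  have hx0 : x ≠ 0 := (IsUnit.of_pow_eq_one hx (Nat.succ_ne_zero _)).ne_zero
  have hy0 : y ≠ 0 := (IsUnit.of_pow_eq_one hy (Nat.succ_ne_zero _)).ne_zero
  have hz0 : z ≠ 0 := (IsUnit.of_pow_eq_one hz (Nat.succ_ne_zero _)).ne_zero
  have hscale : (x * y * z) ^ 5 ≠ 0 := by positivity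
  have hXYZ : (x - 1) * (y - 1) * (z - 1) ≠ 0 := by
    simp only [ne_eq, mul_eq_zero, sub_eq_zero, not_or]
    exact ⟨⟨hx1, hy1⟩, hz1⟩
  rw [← mul_eq_zero_iff_left hscale, det_mul_pow_five_columns hx0 hy0 hz0,
    det_pow_nine_pow_ten_rows, mul_eq_zero_iff_left hXYZ]

/-- vanishing of the 4×4 determinant is equivalent to vanishing of
the 2×2 determinant. -/
theorem stmt13 {E : Type*} [Field E] [Fintype E] (m : ℕ) (hm : 0 < m)
    (hE : Fintype.card E = (3 ^ m) ^ 2)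
    (x y z : E) (hx : x ^ (3 ^ m + 1) = 1) (hy : y ^ (3 ^ m + 1) = 1)
    (hz : z ^ (3 ^ m + 1) = 1)
    (hx1 : x ≠ 1) (hy1 : y ≠ 1) (hz1 : z ≠ 1)
    (hxy : x ≠ y) (hxz : x ≠ z) (hyz : y ≠ z) :
    Matrix.det !![x ^ 4, y ^ 4, z ^ 4, 1;
                  x ^ 5, y ^ 5, z ^ 5, 1;
                  x ^ (-5 : ℤ), y ^ (-5 : ℤ), z ^ (-5 : ℤ), 1;
                  x ^ (-4 : ℤ), y ^ (-4 : ℤ), z ^ (-4 : ℤ), 1] = 0 ↔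
    ((y - 1) ^ 9 - (x - 1) ^ 9) * ((z - 1) ^ 8 - (x - 1) ^ 8) -
      ((z - 1) ^ 9 - (x - 1) ^ 9) * ((y - 1) ^ 8 - (x - 1) ^ 8) = 0 :=
  stmt13_general m hE x y z hx hy hz hx1 hy1 hz1
end

section
/- Let q = 3^m with m an odd positive integer and let x, y, z be pairwise distinct elements of U_{q+1}\{1} in F_{q^2}. With X = x-1, Y = y-1, Z = z-1, the equation (Y^9 - X^9)(Z^8 - X^8) - (Z^9 - X^9)(Y^8 - X^8) = 0 holds in F_{q^2} if and only if (y-1)(z-x) = -(x-1)(z-y) holds in F_{q^2}. -/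
/-!
Put `a = x - 1`, `b = y - 1`, `c = z - 1`, `N = (y - 1)(z - x) = b(c - a)` and
`D = (x - 1)(z - y) = a(c - b)`. In characteristic 3 the determinant times `c` equals
`(b - c)(c - a)(N⁸ - D⁸)`, so the determinant vanishes iff `Δ = N / D` is an 8th root of unity.
Since `u ^ q = u⁻¹` on `U_{q+1}`, `Δ ^ q = Δ`, so `Δ` is also a `(q - 1)`-th root of unity, and
`gcd (q - 1) 8 = 2` forces `Δ = ±1`; finally `N - D = (y - x)(z - 1) ≠ 0` rules out `Δ = 1`.
-/

theorem Nat.gcd_three_pow_sub_one_eight {m : ℕ} (hm : Odd m) : (3 ^ m - 1).gcd 8 = 2 := by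
  have h3 : 3 ^ m % 8 = 3 := by
    obtain ⟨k, rfl⟩ := hm
    rw [pow_succ, pow_mul, Nat.mul_mod, Nat.pow_mod]
    norm_num
  have h2 : (3 ^ m - 1) % 8 = 2 := by
    generalize 3 ^ m = t at h3
    omega
  rw [Nat.gcd_comm, Nat.gcd_rec, h2]
  rfl

theorem mul_det_pow_nine_pow_eight_eq {R : Type*} [CommRing R] [CharP R 3] (a b c : R) :
    c * ((b ^ 9 - a ^ 9) * (c ^ 8 - a ^ 8) - (c ^ 9 - a ^ 9) * (b ^ 8 - a ^ 8)) =
      (b - c) * (c - a) * ((b * (c - a)) ^ 8 - (a * (c - b)) ^ 8) := by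
  linear_combination (norm := ring_nf)
  reduce_mod_char!

theorem eq_neg_one_of_pow_eq_self_of_pow_eight_eq_one {R : Type*} [CommRing R] [IsDomain R]
    {q : ℕ} (hq : (q - 1).gcd 8 = 2) {Δ : R} (hΔq : Δ ^ q = Δ) (hΔ8 : Δ ^ 8 = 1) (hΔ1 : Δ ≠ 1) :
    Δ = -1 := by
  have hΔ0 : Δ ≠ 0 := by rintro rfl; simp at hΔ8
  have hq0 : q ≠ 0 := by rintro rfl; simp at hq
  have hΔq1 : Δ ^ (q - 1) = 1 :=
    mul_right_cancel₀ hΔ0 (by rw [pow_sub_one_mul hq0, hΔq, one_mul])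
  have hΔ2 : Δ ^ 2 = 1 := hq ▸ pow_gcd_eq_one.2 ⟨hΔq1, hΔ8⟩
  exact (sq_eq_one_iff.1 hΔ2).resolve_left hΔ1

section UnitCircle

variable {p : ℕ} [Fact p.Prime] {k : ℕ}

theorem sub_pow_mul_eq_of_pow_succ_eq_one {R : Type*} [CommRing R] [CharP R p] {x y : R}
    (hx : x ^ (p ^ k + 1) = 1) (hy : y ^ (p ^ k + 1) = 1) :
    (y - x) ^ p ^ k * (x * y) = x - y := by
  rw [sub_pow_char_pow]
  linear_combination x * hy - y * hx

variable {K : Type*} [Field K] [CharP K p] {x y z : K}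

theorem crossRatio_pow_eq_self (hx : x ^ (p ^ k + 1) = 1) (hy : y ^ (p ^ k + 1) = 1)
    (hz : z ^ (p ^ k + 1) = 1) :
    ((y - 1) * (z - x) / ((x - 1) * (z - y))) ^ p ^ k =
      (y - 1) * (z - x) / ((x - 1) * (z - y)) := by
  have h1 : (1 : K) ^ (p ^ k + 1) = 1 := one_pow _
  have hw : x * y * z ≠ 0 := by
    refine mul_ne_zero (mul_ne_zero ?_ ?_) ?_ <;> rintro rfl <;> simp_all
  have hN : ((y - 1) * (z - x)) ^ p ^ k * (x * y * z) = (y - 1) * (z - x) := by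
    rw [mul_pow]
    linear_combination ((z - x) ^ p ^ k * (x * z)) * sub_pow_mul_eq_of_pow_succ_eq_one h1 hy +
      (1 - y) * sub_pow_mul_eq_of_pow_succ_eq_one hx hz
  have hD : ((x - 1) * (z - y)) ^ p ^ k * (x * y * z) = (x - 1) * (z - y) := by
    rw [mul_pow]
    linear_combination ((z - y) ^ p ^ k * (y * z)) * sub_pow_mul_eq_of_pow_succ_eq_one h1 hx +
      (1 - x) * sub_pow_mul_eq_of_pow_succ_eq_one hy hz
  rw [div_pow, ← mul_div_mul_right _ _ hw, hN, hD]

end UnitCircle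

theorem stmt14_general {E : Type*} [Field E] [Fintype E] (m : ℕ) (hm : Odd m)
    (hE : Fintype.card E = (3 ^ m) ^ 2)
    (x y z : E) (hx : x ^ (3 ^ m + 1) = 1) (hy : y ^ (3 ^ m + 1) = 1)
    (hz : z ^ (3 ^ m + 1) = 1)
    (hx1 : x ≠ 1) (hz1 : z ≠ 1)
    (hxy : x ≠ y) (hxz : x ≠ z) (hyz : y ≠ z) :
    ((y - 1) ^ 9 - (x - 1) ^ 9) * ((z - 1) ^ 8 - (x - 1) ^ 8) -
      ((z - 1) ^ 9 - (x - 1) ^ 9) * ((y - 1) ^ 8 - (x - 1) ^ 8) = 0 ↔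
    (y - 1) * (z - x) = -((x - 1) * (z - y)) := by
  have : CharP E 3 := charP_of_card_eq_prime_pow (hE.trans (pow_mul 3 m 2).symm)
  have key := mul_det_pow_nine_pow_eight_eq (x - 1) (y - 1) (z - 1)
  simp only [sub_sub_sub_cancel_right] at key
  set N := (y - 1) * (z - x)
  set D := (x - 1) * (z - y)
  have hD : D ≠ 0 := mul_ne_zero (sub_ne_zero.2 hx1) (sub_ne_zero.2 hyz.symm)
  have hND : N ≠ D := fun h ↦
    mul_ne_zero (sub_ne_zero.2 hxy.symm) (sub_ne_zero.2 hz1) (by linear_combination h)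
  rw [← mul_right_inj' (sub_ne_zero.2 hz1), mul_zero, key, mul_eq_zero,
    or_iff_right (mul_ne_zero (sub_ne_zero.2 hyz) (sub_ne_zero.2 hxz.symm)), sub_eq_zero]
  refine ⟨fun h8 ↦ ?_, fun h ↦ by rw [h, neg_pow, Even.neg_one_pow (by decide), one_mul]⟩
  have hΔ := eq_neg_one_of_pow_eq_self_of_pow_eight_eq_one (Nat.gcd_three_pow_sub_one_eight hm)
    (crossRatio_pow_eq_self hx hy hz) (by rw [div_pow, h8, div_self (pow_ne_zero 8 hD)])
    ((div_eq_one_iff_eq hD).not.2 hND)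
  rwa [div_eq_iff hD, neg_one_mul] at hΔ

/-- with `X = x-1`, `Y = y-1`, `Z = z-1`, the vanishing of the 2×2
determinant is equivalent to `(y-1)(z-x) = -(x-1)(z-y)`. -/
theorem stmt14 {E : Type*} [Field E] [Fintype E] (m : ℕ) (hm : Odd m)
    (hE : Fintype.card E = (3 ^ m) ^ 2)
    (x y z : E) (hx : x ^ (3 ^ m + 1) = 1) (hy : y ^ (3 ^ m + 1) = 1)
    (hz : z ^ (3 ^ m + 1) = 1)
    (hx1 : x ≠ 1) (hy1 : y ≠ 1) (hz1 : z ≠ 1)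
    (hxy : x ≠ y) (hxz : x ≠ z) (hyz : y ≠ z) :
    ((y - 1) ^ 9 - (x - 1) ^ 9) * ((z - 1) ^ 8 - (x - 1) ^ 8) -
      ((z - 1) ^ 9 - (x - 1) ^ 9) * ((y - 1) ^ 8 - (x - 1) ^ 8) = 0 ↔
    (y - 1) * (z - x) = -((x - 1) * (z - y)) :=
  stmt14_general m hm hE x y z hx hy hz hx1 hz1 hxy hxz hyz
end

section
/- Let q = 3^m with m odd, and let x, y, z ∈ U_{q+1}\{1} ⊆ F_{q^2} be pairwise distinct. If Δ := (y-1)(z-x)/((x-1)(z-y)) satisfies Δ^8 = 1, then Δ = -1. -/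
/-!
Δ is the cross ratio of `(y, x; 1, z)`. On `U_{q+1}` the Frobenius `u ↦ u ^ q` is inversion, a
Möbius transformation, so it fixes Δ, i.e. `Δ ∈ 𝔽_q^×`. The order of Δ therefore divides
`gcd(8, q - 1) = 2` (as `q ≡ 3 mod 8`), so `Δ = ±1`, and `Δ = 1` would force `x = y` or
`z = 1`.
-/

theorem Nat.gcd_eight_three_pow_sub_one {m : ℕ} (hm : Odd m) : Nat.gcd 8 (3 ^ m - 1) = 2 := by
  obtain ⟨k, rfl⟩ := hm
  have h3 : 3 ^ (2 * k + 1) % 8 = 3 := by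
    rw [pow_succ, pow_mul, Nat.mul_mod, Nat.pow_mod]
    norm_num
  generalize 3 ^ (2 * k + 1) = q at h3 ⊢
  rw [Nat.gcd_rec, show (q - 1) % 8 = 2 by omega]
  rfl

theorem pow_sub_one_eq_one_of_pow_eq_self {G₀ : Type*} [GroupWithZero G₀] {w : G₀} {n : ℕ}
    (hw : w ≠ 0) (hn : n ≠ 0) (h : w ^ n = w) : w ^ (n - 1) = 1 := by
  apply mul_right_cancel₀ hw
  rw [← pow_succ, Nat.sub_add_cancel (Nat.one_le_iff_ne_zero.mpr hn), h, one_mul]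

section CrossRatio

variable {K L : Type*} [Field K] [Field L]

/-- The usual cross ratio `[a, b; c, d]`, with the subtractions ordered so that the Δ of the
theorem is `crossRatio y x 1 z` by `rfl`. -/
def crossRatio (a b c d : K) : K := (a - c) * (d - b) / ((b - c) * (d - a))

theorem map_crossRatio (f : K →+* L) (a b c d : K) :
    f (crossRatio a b c d) = crossRatio (f a) (f b) (f c) (f d) := by
  simp only [crossRatio, map_div₀, map_mul, map_sub]

theorem crossRatio_inv {a b c d : K} (ha : a ≠ 0) (hb : b ≠ 0) (hc : c ≠ 0) (hd : d ≠ 0) :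
    crossRatio a⁻¹ b⁻¹ c⁻¹ d⁻¹ = crossRatio a b c d := by
  rw [crossRatio, inv_sub_inv ha hc, inv_sub_inv hd hb, inv_sub_inv hb hc, inv_sub_inv hd ha,
    div_mul_div_comm, div_mul_div_comm, div_div_div_eq,
    show a * c * (d * b) = b * c * (d * a) by ring, mul_comm (b * c * (d * a)),
    mul_div_mul_right _ _ (by positivity), crossRatio]
  congr 1 <;> ring

theorem crossRatio_ne_one {a b c d : K} (hab : a ≠ b) (hcd : c ≠ d) :
    crossRatio a b c d ≠ 1 := by
  intro h
  have hden : (b - c) * (d - a) ≠ 0 := by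
    rintro h0; simp [crossRatio, h0] at h
  have : (a - b) * (d - c) = 0 := by
    rw [crossRatio, div_eq_one_iff_eq hden] at h
    linear_combination h
  rcases mul_eq_zero.mp this with h' | h'
  · exact hab (sub_eq_zero.mp h')
  · exact hcd (sub_eq_zero.mp h').symm

theorem crossRatio_pow_eq_self_of_pow_succ_eq_one (p n : ℕ) [ExpChar K p]
    {a b c d : K} (ha : a ^ (p ^ n + 1) = 1) (hb : b ^ (p ^ n + 1) = 1)
    (hc : c ^ (p ^ n + 1) = 1) (hd : d ^ (p ^ n + 1) = 1) :
    crossRatio a b c d ^ p ^ n = crossRatio a b c d := by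
  have frob_eq_inv {u : K} (hu : u ^ (p ^ n + 1) = 1) : iterateFrobenius K p n u = u⁻¹ :=
    eq_inv_of_mul_eq_one_left (by rwa [iterateFrobenius_def, ← pow_succ])
  have ne_zero {u : K} (hu : u ^ (p ^ n + 1) = 1) : u ≠ 0 := by
    rintro rfl; simp at hu
  calc crossRatio a b c d ^ p ^ n = iterateFrobenius K p n (crossRatio a b c d) :=
        (iterateFrobenius_def ..).symm
    _ = crossRatio a⁻¹ b⁻¹ c⁻¹ d⁻¹ := by
        rw [map_crossRatio, frob_eq_inv ha, frob_eq_inv hb, frob_eq_inv hc, frob_eq_inv hd]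
    _ = crossRatio a b c d := crossRatio_inv (ne_zero ha) (ne_zero hb) (ne_zero hc) (ne_zero hd)

end CrossRatio

theorem stmt16_general {E : Type*} [Field E] [Fintype E] (m : ℕ) (hm : Odd m)
    (hE : Fintype.card E = (3 ^ m) ^ 2)
    (x y z : E) (hx : x ^ (3 ^ m + 1) = 1) (hy : y ^ (3 ^ m + 1) = 1)
    (hz : z ^ (3 ^ m + 1) = 1)
    (hz1 : z ≠ 1)
    (hxy : x ≠ y)
    (hΔ : ((y - 1) * (z - x) / ((x - 1) * (z - y))) ^ 8 = 1) :
    (y - 1) * (z - x) / ((x - 1) * (z - y)) = -1 := by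
  have : Fact (Nat.Prime 3) := ⟨Nat.prime_three⟩
  have : CharP E 3 := charP_of_card_eq_prime_pow (hE.trans (pow_mul 3 m 2).symm)
  change crossRatio y x 1 z ^ 8 = 1 at hΔ
  change crossRatio y x 1 z = -1
  have hfix : crossRatio y x 1 z ^ 3 ^ m = crossRatio y x 1 z :=
    crossRatio_pow_eq_self_of_pow_succ_eq_one 3 m hy hx (one_pow _) hz
  have hsq : crossRatio y x 1 z ^ 2 = 1 := by
    rw [← Nat.gcd_eight_three_pow_sub_one hm, pow_gcd_eq_one]
    refine ⟨hΔ, pow_sub_one_eq_one_of_pow_eq_self ?_ (by positivity) hfix⟩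
    rintro h0
    simp [h0] at hΔ
  exact (sq_eq_one_iff.mp hsq).resolve_left (crossRatio_ne_one hxy.symm hz1.symm)

/-- if `Δ = (y-1)(z-x)/((x-1)(z-y))` satisfies `Δ^8 = 1`,
then `Δ = -1`. -/
theorem stmt16 {E : Type*} [Field E] [Fintype E] (m : ℕ) (hm : Odd m)
    (hE : Fintype.card E = (3 ^ m) ^ 2)
    (x y z : E) (hx : x ^ (3 ^ m + 1) = 1) (hy : y ^ (3 ^ m + 1) = 1)
    (hz : z ^ (3 ^ m + 1) = 1)
    (hx1 : x ≠ 1) (hy1 : y ≠ 1) (hz1 : z ≠ 1)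
    (hxy : x ≠ y) (hxz : x ≠ z) (hyz : y ≠ z)
    (hΔ : ((y - 1) * (z - x) / ((x - 1) * (z - y))) ^ 8 = 1) :
    (y - 1) * (z - x) / ((x - 1) * (z - y)) = -1 :=
  stmt16_general m hm hE x y z hx hy hz hz1 hxy hΔ
end

section
/- Let q = 3^m with m an odd positive integer. For any two distinct elements x, y ∈ U_{q+1}\{1} ⊆ F_{q^2}, there exists exactly one element z ∈ U_{q+1}\{x, y, 1} satisfying (y-1)(z-x) = -(x-1)(z-y) in F_{q^2}; namely z = -(x + y + xy)/(x + y + 1). -/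
/-!
The Frobenius `σ : a ↦ a ^ q` acts on `U_{q+1}` as inversion. In characteristic 3 the
equation `(y - 1)(z - x) = -(x - 1)(z - y)` is linear in `z`, namely
`(x + y + 1) z = -(x + y + xy)`, so it has at most one solution. Both coefficients are nonzero:
applying `σ` to `x + y + 1 = 0` forces `x² + x + 1 = (x - 1)² = 0`, and applying `σ` to
`x + y + xy = 0` gives back `x + y + 1 = 0`. Hence `z₀ = -(x + y + xy)/(x + y + 1)` is the
solution; `σ z₀ = z₀⁻¹` puts it in `U_{q+1}`, and evaluating the linear equation at
`z = x, y, 1` factors it as `(x - 1)(x - y)`, `(y - 1)(y - x)`, `(x - 1)(y - 1)`, none of which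
vanishes.
-/

section CharThree

variable {R : Type*} [CommRing R] [CharP R 3]

theorem sub_one_mul_sub_eq_neg_iff (x y z : R) :
    (y - 1) * (z - x) = -((x - 1) * (z - y)) ↔ (x + y + 1) * z = -(x + y + x * y) := by
  constructor <;> intro h
  · linear_combination h + (z + x * y) * CharP.ofNat_eq_zero R 3
  · linear_combination h - (z + x * y) * CharP.ofNat_eq_zero R 3

variable [IsDomain R] {x y z : R}

theorem ne_left_of_add_add_one_mul_eq (hx1 : x ≠ 1) (hxy : x ≠ y)
    (hz : (x + y + 1) * z = -(x + y + x * y)) : z ≠ x := by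
  rintro rfl
  exact mul_ne_zero (sub_ne_zero.2 hx1) (sub_ne_zero.2 hxy)
    (by linear_combination hz - (z * y + z) * CharP.ofNat_eq_zero R 3)

theorem ne_one_of_add_add_one_mul_eq (hx1 : x ≠ 1) (hy1 : y ≠ 1)
    (hz : (x + y + 1) * z = -(x + y + x * y)) : z ≠ 1 := by
  rintro rfl
  exact mul_ne_zero (sub_ne_zero.2 hx1) (sub_ne_zero.2 hy1)
    (by linear_combination hz - (x + y) * CharP.ofNat_eq_zero R 3)

end CharThree

section Inversion

variable {F : Type*} [Field F] (σ : F →+* F) {x y : F}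

theorem add_add_one_ne_zero [CharP F 3] (hx0 : x ≠ 0) (hy0 : y ≠ 0) (hσx : σ x = x⁻¹)
    (hσy : σ y = y⁻¹) (hx1 : x ≠ 1) : x + y + 1 ≠ 0 := by
  intro h
  have hσ : x⁻¹ + y⁻¹ + 1 = 0 := by simpa [hσx, hσy] using congrArg σ h
  field_simp at hσ
  have hsq : (x - 1) ^ 2 = 0 := by
    linear_combination (x + 1) * h - hσ - x * CharP.ofNat_eq_zero F 3
  exact hx1 (sub_eq_zero.mp (pow_eq_zero_iff two_ne_zero |>.mp hsq))

theorem add_add_mul_ne_zero (hx0 : x ≠ 0) (hy0 : y ≠ 0) (hσx : σ x = x⁻¹)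
    (hσy : σ y = y⁻¹) (h : x + y + 1 ≠ 0) : x + y + x * y ≠ 0 := by
  intro h'
  have hσ : x⁻¹ + y⁻¹ + x⁻¹ * y⁻¹ = 0 := by simpa [hσx, hσy] using congrArg σ h'
  field_simp at hσ
  exact h (by linear_combination hσ)

theorem map_neg_add_add_mul_div_eq_inv (hx0 : x ≠ 0) (hy0 : y ≠ 0) (hσx : σ x = x⁻¹)
    (hσy : σ y = y⁻¹) :
    σ (-(x + y + x * y) / (x + y + 1)) = (-(x + y + x * y) / (x + y + 1))⁻¹ := by
  simp only [map_div₀, map_neg, map_add, map_mul, map_one, hσx, hσy]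
  have hnum : x⁻¹ + y⁻¹ + x⁻¹ * y⁻¹ = (x + y + 1) / (x * y) := by field_simp; ring
  have hden : x⁻¹ + y⁻¹ + 1 = (x + y + x * y) / (x * y) := by field_simp; ring
  rw [hnum, hden, ← neg_div, div_div_div_cancel_right₀ (mul_ne_zero hx0 hy0), inv_div, div_neg,
    neg_div]

end Inversion

theorem stmt17_general {E : Type*} [Field E] [Fintype E] (m : ℕ)
    (hE : Fintype.card E = (3 ^ m) ^ 2)
    (x y : E) (hx : x ^ (3 ^ m + 1) = 1) (hy : y ^ (3 ^ m + 1) = 1)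
    (hx1 : x ≠ 1) (hy1 : y ≠ 1) (hxy : x ≠ y) :
    (∃! z : E, z ^ (3 ^ m + 1) = 1 ∧ z ≠ x ∧ z ≠ y ∧ z ≠ 1 ∧
        (y - 1) * (z - x) = -((x - 1) * (z - y))) ∧
    ((-(x + y + x * y) / (x + y + 1)) ^ (3 ^ m + 1) = 1 ∧
      -(x + y + x * y) / (x + y + 1) ≠ x ∧
      -(x + y + x * y) / (x + y + 1) ≠ y ∧
      -(x + y + x * y) / (x + y + 1) ≠ 1 ∧
      (y - 1) * (-(x + y + x * y) / (x + y + 1) - x) =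
        -((x - 1) * (-(x + y + x * y) / (x + y + 1) - y))) := by
  have : Fact (Nat.Prime 3) := ⟨Nat.prime_three⟩
  have : CharP E 3 := charP_of_card_eq_prime_pow (hE.trans (pow_mul 3 m 2).symm)
  set σ := iterateFrobenius E 3 m
  have hσ : ∀ a : E, a ^ (3 ^ m + 1) = 1 → σ a = a⁻¹ := fun a ha =>
    (iterateFrobenius_def 3 m a).trans (eq_inv_of_mul_eq_one_left (by rw [← pow_succ, ha]))
  have hx0 : x ≠ 0 := by rintro rfl; simp at hx
  have hy0 : y ≠ 0 := by rintro rfl; simp at hy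
  have hD := add_add_one_ne_zero σ hx0 hy0 (hσ x hx) (hσ y hy) hx1
  have hN := add_add_mul_ne_zero σ hx0 hy0 (hσ x hx) (hσ y hy) hD
  set z₀ := -(x + y + x * y) / (x + y + 1)
  have hz₀ : (x + y + 1) * z₀ = -(x + y + x * y) := mul_div_cancel₀ _ hD
  have hz₀U : z₀ ^ (3 ^ m + 1) = 1 := by
    rw [pow_succ, ← iterateFrobenius_def,
      map_neg_add_add_mul_div_eq_inv σ hx0 hy0 (hσ x hx) (hσ y hy),
      inv_mul_cancel₀ (div_ne_zero (neg_ne_zero.2 hN) hD)]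
  have hz₀_spec : z₀ ^ (3 ^ m + 1) = 1 ∧ z₀ ≠ x ∧ z₀ ≠ y ∧ z₀ ≠ 1 ∧
      (y - 1) * (z₀ - x) = -((x - 1) * (z₀ - y)) :=
    ⟨hz₀U, ne_left_of_add_add_one_mul_eq hx1 hxy hz₀,
      ne_left_of_add_add_one_mul_eq hy1 hxy.symm (by linear_combination hz₀),
      ne_one_of_add_add_one_mul_eq hx1 hy1 hz₀, (sub_one_mul_sub_eq_neg_iff x y z₀).2 hz₀⟩
  refine ⟨⟨z₀, hz₀_spec, fun z hz => mul_left_cancel₀ hD ?_⟩, hz₀_spec⟩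
  exact ((sub_one_mul_sub_eq_neg_iff x y z).1 hz.2.2.2.2).trans hz₀.symm

/-- for distinct `x, y ∈ U_{q+1} \ {1}` there is exactly one
`z ∈ U_{q+1} \ {x, y, 1}` with `(y-1)(z-x) = -(x-1)(z-y)`, namely
`z = -(x+y+xy)/(x+y+1)`. -/
theorem stmt17 {E : Type*} [Field E] [Fintype E] (m : ℕ) (hm : Odd m)
    (hE : Fintype.card E = (3 ^ m) ^ 2)
    (x y : E) (hx : x ^ (3 ^ m + 1) = 1) (hy : y ^ (3 ^ m + 1) = 1)
    (hx1 : x ≠ 1) (hy1 : y ≠ 1) (hxy : x ≠ y) :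
    (∃! z : E, z ^ (3 ^ m + 1) = 1 ∧ z ≠ x ∧ z ≠ y ∧ z ≠ 1 ∧
        (y - 1) * (z - x) = -((x - 1) * (z - y))) ∧
    ((-(x + y + x * y) / (x + y + 1)) ^ (3 ^ m + 1) = 1 ∧
      -(x + y + x * y) / (x + y + 1) ≠ x ∧
      -(x + y + x * y) / (x + y + 1) ≠ y ∧
      -(x + y + x * y) / (x + y + 1) ≠ 1 ∧
      (y - 1) * (-(x + y + x * y) / (x + y + 1) - x) =
        -((x - 1) * (-(x + y + x * y) / (x + y + 1) - y))) :=
  stmt17_general m hE x y hx hy hx1 hy1 hxy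
end

section
/- Let q = 3^m with m an odd positive integer and let x, y, z ∈ U_{q+1}\{1} ⊆ F_{q^2} be pairwise distinct. Then the system of linear equations a·x^4 + b·y^4 + c·z^4 + d = 0 and a·x^5 + b·y^5 + c·z^5 + d = 0 has a nonzero solution (a, b, c, d) ∈ F_q^4 if and only if the 4×4 determinant det[(x^4,y^4,z^4,1);(x^5,y^5,z^5,1);(x^{-5},y^{-5},z^{-5},1);(x^{-4},y^{-4},z^{-4},1)] vanishes in F_{q^2}. -/
/-!
The Frobenius `σ : a ↦ a ^ q` is an involution of `F_{q^2}` with fixed field `F_q`, and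
`σ u = u⁻¹` on `U_{q+1}`. Hence `σ` maps the rows of the 4×4 matrix `M` onto its rows in reverse
order. For a `σ`-fixed vector the last two equations of `M v = 0` are therefore the conjugates of
the first two, and `ker M` is `σ`-stable. A nonzero `σ`-stable subspace contains a nonzero
`σ`-fixed vector, so the system has a nonzero solution over `F_q` iff `ker M ≠ 0`, i.e. iff
`det M = 0`.
-/

open Matrix Polynomial

theorem FiniteField.exists_pow_ne_self {K : Type*} [Field K] [Fintype K] {q : ℕ} (hq : 1 < q)
    (hcard : q < Fintype.card K) : ∃ c : K, c ^ q ≠ c := by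
  by_contra! h
  have hroots : (Finset.univ : Finset K).val ⊆ (X ^ q - X : K[X]).roots := fun c _ => by
    simp [mem_roots (X_pow_card_sub_X_ne_zero K hq), h c]
  have := card_le_degree_of_subset_roots hroots
  rw [X_pow_card_sub_X_natDegree_eq K hq, Finset.card_univ] at this
  omega

section Frobenius

variable {K : Type*} [Field K] [Fintype K] {p k : ℕ} [ExpChar K p]

theorem FiniteField.iterateFrobenius_involutive (hK : Fintype.card K = (p ^ k) ^ 2) :
    Function.Involutive (iterateFrobenius K p k) :=
  fun a => by rw [iterateFrobenius_def, iterateFrobenius_def, ← pow_mul, ← sq, ← hK, pow_card]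

theorem FiniteField.exists_iterateFrobenius_ne_self (hK : Fintype.card K = (p ^ k) ^ 2) :
    ∃ c : K, iterateFrobenius K p k c ≠ c := by
  have hq : 1 < p ^ k := by
    by_contra! h
    have := hK ▸ Fintype.one_lt_card (α := K)
    have := pow_le_one₀ (n := 2) (Nat.zero_le _) h
    omega
  simpa only [iterateFrobenius_def] using exists_pow_ne_self hq (hK ▸ lt_self_pow₀ hq one_lt_two)

end Frobenius

section Descent

variable {E : Type*} [Field E] (σ : E →+* E)

theorem Submodule.exists_ne_zero_comp_eq_of_comp_mem {n : Type*} (hσ : Function.Involutive σ)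
    (hnf : ∃ c, σ c ≠ c) (W : Submodule E (n → E)) (hW : ∀ v ∈ W, σ ∘ v ∈ W) {v : n → E}
    (hvW : v ∈ W) (hv : v ≠ 0) : ∃ w ∈ W, w ≠ 0 ∧ σ ∘ w = w := by
  by_cases htr : v + σ ∘ v = 0
  · -- here `σ ∘ v = -v`, and `c - σ c` is a nonzero scalar negated by `σ`
    obtain ⟨c, hc⟩ := hnf
    refine ⟨(c - σ c) • v, W.smul_mem _ hvW, smul_ne_zero (sub_ne_zero.mpr hc.symm) hv, ?_⟩
    have hneg : ∀ j, σ (v j) = -v j := fun j => eq_neg_of_add_eq_zero_right (congrFun htr j)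
    funext j
    simp only [Function.comp_apply, Pi.smul_apply, smul_eq_mul, map_mul, map_sub, hσ _, hneg]
    ring
  · refine ⟨v + σ ∘ v, W.add_mem hvW (hW v hvW), htr, ?_⟩
    funext j
    simp [hσ _, add_comm]

variable {m n : Type*} [Fintype n]

theorem Matrix.map_mulVec_apply_of_map_eq_submatrix (M : Matrix m n E) {e : m → m}
    (hM : M.map σ = M.submatrix e id) (v : n → E) (i : m) :
    σ ((M *ᵥ v) i) = (M *ᵥ (σ ∘ v)) (e i) := by
  rw [RingHom.map_mulVec, hM]
  rfl

theorem Matrix.exists_ne_zero_comp_eq_mulVec_eq_zero_iff (hσ : Function.Involutive σ)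
    (hnf : ∃ c, σ c ≠ c) (M : Matrix m n E) {e : m → m} (he : Function.Surjective e)
    (hM : M.map σ = M.submatrix e id) :
    (∃ v ≠ 0, σ ∘ v = v ∧ M *ᵥ v = 0) ↔ ∃ v ≠ 0, M *ᵥ v = 0 := by
  refine ⟨fun ⟨v, hv, _, hMv⟩ => ⟨v, hv, hMv⟩, fun ⟨v, hv, hMv⟩ => ?_⟩
  have hstable : ∀ u ∈ LinearMap.ker M.mulVecLin, σ ∘ u ∈ LinearMap.ker M.mulVecLin := by
    intro u hu
    rw [LinearMap.mem_ker, mulVecLin_apply] at hu ⊢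
    funext i
    obtain ⟨k, rfl⟩ := he i
    simp [← map_mulVec_apply_of_map_eq_submatrix σ M hM, hu]
  obtain ⟨w, hwM, hw, hσw⟩ :=
    Submodule.exists_ne_zero_comp_eq_of_comp_mem σ hσ hnf _ hstable (v := v) hMv hv
  exact ⟨w, hw, hσw, hwM⟩

end Descent

theorem stmt18_general {E : Type*} [Field E] [Fintype E] (m : ℕ)
    (hE : Fintype.card E = (3 ^ m) ^ 2)
    (x y z : E) (hx : x ^ (3 ^ m + 1) = 1) (hy : y ^ (3 ^ m + 1) = 1)
    (hz : z ^ (3 ^ m + 1) = 1) :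
    (∃ a b c d : E,
        a ^ (3 ^ m) = a ∧ b ^ (3 ^ m) = b ∧ c ^ (3 ^ m) = c ∧ d ^ (3 ^ m) = d ∧
        ¬(a = 0 ∧ b = 0 ∧ c = 0 ∧ d = 0) ∧
        a * x ^ 4 + b * y ^ 4 + c * z ^ 4 + d = 0 ∧
        a * x ^ 5 + b * y ^ 5 + c * z ^ 5 + d = 0) ↔
    Matrix.det !![x ^ 4, y ^ 4, z ^ 4, 1;
                  x ^ 5, y ^ 5, z ^ 5, 1;
                  x ^ (-5 : ℤ), y ^ (-5 : ℤ), z ^ (-5 : ℤ), 1;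
                  x ^ (-4 : ℤ), y ^ (-4 : ℤ), z ^ (-4 : ℤ), 1] = 0 := by
  have : CharP E 3 := charP_of_card_eq_prime_pow (hE.trans (pow_mul 3 m 2).symm)
  set σ := iterateFrobenius E 3 m
  have hσ : ∀ a, σ a = a ^ 3 ^ m := iterateFrobenius_def 3 m
  have hinv : ∀ {u : E}, u ^ (3 ^ m + 1) = 1 → σ u = u⁻¹ := fun hu => by
    rw [hσ]
    exact eq_inv_of_mul_eq_one_left (by rwa [← pow_succ])
  set M : Matrix (Fin 4) (Fin 4) E := !![x ^ 4, y ^ 4, z ^ 4, 1;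
                  x ^ 5, y ^ 5, z ^ 5, 1;
                  x ^ (-5 : ℤ), y ^ (-5 : ℤ), z ^ (-5 : ℤ), 1;
                  x ^ (-4 : ℤ), y ^ (-4 : ℤ), z ^ (-4 : ℤ), 1]
  have hMσ : M.map σ = M.submatrix Fin.rev id := by
    ext i j
    fin_cases i <;> fin_cases j <;> simp [M, hinv hx, hinv hy, hinv hz]
  have hrows : ∀ v, σ ∘ v = v → (M *ᵥ v = 0 ↔ (M *ᵥ v) 0 = 0 ∧ (M *ᵥ v) 1 = 0) := by
    intro v hv
    have hrev := fun i => hv ▸ (map_mulVec_apply_of_map_eq_submatrix σ M hMσ v i).symm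
    refine ⟨fun h => by simp [h], fun ⟨h0, h1⟩ => ?_⟩
    ext i
    fin_cases i
    exacts [h0, h1, by simpa [h1] using hrev 1, by simpa [h0] using hrev 0]
  rw [← exists_mulVec_eq_zero_iff,
    ← exists_ne_zero_comp_eq_mulVec_eq_zero_iff σ (FiniteField.iterateFrobenius_involutive hE)
      (FiniteField.exists_iterateFrobenius_ne_self hE) _ Fin.rev_surjective hMσ,
    exists_congr fun v => and_congr_right fun _ => and_congr_right (hrows v)]
  simp only [Fin.exists_fin_succ_pi, Fin.exists_fin_zero_pi]
  refine exists₄_congr fun a b c d => ?_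
  simp [funext_iff, Fin.forall_fin_succ, M, mulVec, dotProduct, Fin.sum_univ_four, hσ, mul_comm]
  tauto

/-- the system `a·x⁴+b·y⁴+c·z⁴+d = 0`, `a·x⁵+b·y⁵+c·z⁵+d = 0` has a
nonzero solution with `a,b,c,d` in the Frobenius-fixed subfield `F_q` iff the
4×4 determinant vanishes. -/
theorem stmt18 {E : Type*} [Field E] [Fintype E] (m : ℕ) (hm : Odd m)
    (hE : Fintype.card E = (3 ^ m) ^ 2)
    (x y z : E) (hx : x ^ (3 ^ m + 1) = 1) (hy : y ^ (3 ^ m + 1) = 1)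
    (hz : z ^ (3 ^ m + 1) = 1)
    (hx1 : x ≠ 1) (hy1 : y ≠ 1) (hz1 : z ≠ 1)
    (hxy : x ≠ y) (hxz : x ≠ z) (hyz : y ≠ z) :
    (∃ a b c d : E,
        a ^ (3 ^ m) = a ∧ b ^ (3 ^ m) = b ∧ c ^ (3 ^ m) = c ∧ d ^ (3 ^ m) = d ∧
        ¬(a = 0 ∧ b = 0 ∧ c = 0 ∧ d = 0) ∧
        a * x ^ 4 + b * y ^ 4 + c * z ^ 4 + d = 0 ∧
        a * x ^ 5 + b * y ^ 5 + c * z ^ 5 + d = 0) ↔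
    Matrix.det !![x ^ 4, y ^ 4, z ^ 4, 1;
                  x ^ 5, y ^ 5, z ^ 5, 1;
                  x ^ (-5 : ℤ), y ^ (-5 : ℤ), z ^ (-5 : ℤ), 1;
                  x ^ (-4 : ℤ), y ^ (-4 : ℤ), z ^ (-4 : ℤ), 1] = 0 :=
  stmt18_general m hE x y z hx hy hz
end
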